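/- Let m ≥ 1 be a real number. For all real numbers x, y, one has (x - y)(|x|^{m-1} x - |y|^{m-1} y) ≥ (4m/(m+1)^2) (|x|^{(m+1)/2} - |y|^{(m+1)/2})^2. -/

import Mathlib

/-!
For `0 ≤ b ≤ a` and `p = (m + 1) / 2`, Cauchy–Schwarz applied to `t ↦ t ^ (p - 1)` on `[b, a]`
gives `((a ^ p - b ^ p) / p) ^ 2 ≤ (a - b) (a ^ m - b ^ m) / m`, which is the inequality for
nonnegative arguments since `m / p ^ 2 = 4 m / (m + 1) ^ 2`. General `x, y` reduce to `|x|, |y|`: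
replacing `x, y` by their absolute values can only decrease `(x - y)(|x| ^ (m - 1) x - |y| ^ (m - 1) y)`.
-/

open MeasureTheory intervalIntegral

theorem sq_intervalIntegral_le {f : ℝ → ℝ} {a b : ℝ} (hab : a ≤ b)
    (hf : IntervalIntegrable f volume a b)
    (hf2 : IntervalIntegrable (fun t ↦ f t ^ 2) volume a b) :
    (∫ t in a..b, f t) ^ 2 ≤ (b - a) * ∫ t in a..b, f t ^ 2 := by
  -- the quadratic `c ↦ ∫ (f - c) ^ 2` is nonnegative, so its discriminant is not positive
  have hquad : ∀ c : ℝ, 0 ≤ (b - a) * (c * c) + (-2 * ∫ t in a..b, f t) * c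
      + ∫ t in a..b, f t ^ 2 := by
    intro c
    have hexpand : ∫ t in a..b, (f t - c) ^ 2
        = (b - a) * (c * c) + (-2 * ∫ t in a..b, f t) * c + ∫ t in a..b, f t ^ 2 := by
      have hlin : IntervalIntegrable (fun t ↦ -2 * c * f t + c ^ 2) volume a b :=
        (hf.const_mul _).add intervalIntegrable_const
      calc ∫ t in a..b, (f t - c) ^ 2
          = ∫ t in a..b, (f t ^ 2 + (-2 * c * f t + c ^ 2)) :=
            integral_congr fun t _ ↦ by ring
        _ = _ := by
            rw [integral_add hf2 hlin, integral_add (hf.const_mul _) intervalIntegrable_const,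
              intervalIntegral.integral_const_mul, intervalIntegral.integral_const, smul_eq_mul]
            ring
    rw [← hexpand]
    exact integral_nonneg hab fun t _ ↦ sq_nonneg _
  have := discrim_le_zero hquad
  rw [discrim] at this
  linarith

theorem sq_rpow_sub_rpow_le_of_le {m a b : ℝ} (hm : 0 < m) (hb : 0 ≤ b) (hba : b ≤ a) :
    4 * m / (m + 1) ^ 2 * (a ^ ((m + 1) / 2) - b ^ ((m + 1) / 2)) ^ 2 ≤
      (a - b) * (a ^ m - b ^ m) := by
  set p : ℝ := (m + 1) / 2 with hp
  have hsq : ∀ t ∈ Set.uIcc b a, (t ^ (p - 1)) ^ 2 = t ^ (m - 1) := by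
    intro t ht
    rw [Set.uIcc_of_le hba] at ht
    rw [← Real.rpow_natCast, ← Real.rpow_mul (hb.trans ht.1), hp]
    ring_nf
  have hcs := sq_intervalIntegral_le hba
    (intervalIntegrable_rpow' (by linarith : -1 < p - 1))
    ((intervalIntegrable_rpow' (by linarith : -1 < m - 1)).congr
      (fun t ht ↦ (hsq t (Set.uIoc_subset_uIcc ht)).symm))
  rw [integral_congr hsq, integral_rpow (Or.inl (by linarith)),
    integral_rpow (Or.inl (by linarith))] at hcs
  simp only [sub_add_cancel] at hcs
  calc 4 * m / (m + 1) ^ 2 * (a ^ p - b ^ p) ^ 2 = m * ((a ^ p - b ^ p) / p) ^ 2 := by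
        rw [hp]; field_simp; ring
    _ ≤ m * ((a - b) * ((a ^ m - b ^ m) / m)) := mul_le_mul_of_nonneg_left hcs hm.le
    _ = (a - b) * (a ^ m - b ^ m) := by field_simp

theorem sq_rpow_sub_rpow_le {m a b : ℝ} (hm : 0 < m) (ha : 0 ≤ a) (hb : 0 ≤ b) :
    4 * m / (m + 1) ^ 2 * (a ^ ((m + 1) / 2) - b ^ ((m + 1) / 2)) ^ 2 ≤
      (a - b) * (a ^ m - b ^ m) := by
  rcases le_total b a with hba | hab
  · exact sq_rpow_sub_rpow_le_of_le hm hb hba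
  · have := sq_rpow_sub_rpow_le_of_le hm ha hab
    linarith

theorem abs_sub_mul_rpow_sub_le {m : ℝ} (hm : m ≠ 0) (x y : ℝ) :
    (|x| - |y|) * (|x| ^ m - |y| ^ m) ≤ (x - y) * (|x| ^ (m - 1) * x - |y| ^ (m - 1) * y) := by
  have hx : |x| ^ m = |x| ^ (m - 1) * |x| := by
    rw [← Real.rpow_add_one' (abs_nonneg x) (by simpa using hm), sub_add_cancel]
  have hy : |y| ^ m = |y| ^ (m - 1) * |y| := by
    rw [← Real.rpow_add_one' (abs_nonneg y) (by simpa using hm), sub_add_cancel]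
  set u := |x| ^ (m - 1)
  set v := |y| ^ (m - 1)
  have hgap : (x - y) * (u * x - v * y) - (|x| - |y|) * (u * |x| - v * |y|)
      = (u + v) * (|x * y| - x * y) := by
    rw [abs_mul]
    linear_combination -u * sq_abs x - v * sq_abs y
  have hcross : 0 ≤ (u + v) * (|x * y| - x * y) :=
    mul_nonneg (add_nonneg (Real.rpow_nonneg (abs_nonneg x) _) (Real.rpow_nonneg (abs_nonneg y) _))
      (sub_nonneg.mpr (le_abs_self _))
  rw [hx, hy]
  linarith

/-- Pointwise inequality: for m ≥ 1 and all reals x, y,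
(x - y)(|x|^{m-1} x - |y|^{m-1} y) ≥ (4m/(m+1)²)(|x|^{(m+1)/2} - |y|^{(m+1)/2})². -/
theorem stmt0 (m : ℝ) (hm : 1 ≤ m) (x y : ℝ) :
    (x - y) * (|x| ^ (m - 1) * x - |y| ^ (m - 1) * y) ≥
      (4 * m / (m + 1) ^ 2) * (|x| ^ ((m + 1) / 2) - |y| ^ ((m + 1) / 2)) ^ 2 := by
  have hm0 : 0 < m := by linarith
  exact (sq_rpow_sub_rpow_le hm0 (abs_nonneg x) (abs_nonneg y)).trans
    (abs_sub_mul_rpow_sub_le hm0.ne' x y)
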